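/- arXiv:1908.07469 — 2 statements merged into one kernel-verified Lean document; each statement's English description precedes it below -/
import Mathlib

section
/- Deterministic contraction estimate: for every g ∈ GL_d(ℂ) and every nonzero v ∈ ℂ^d, δ(x_g⁺, g·[v]) ≤ (a_2(g)/a_1(g)) · (‖g‖ ‖v‖)/‖gv‖. -/
open MeasureTheory ProbabilityTheory Filter Real Topology

namespace RMP

noncomputable section

/-- square complex matrices of size d -/
abbrev Mat (d : ℕ) := Matrix (Fin d) (Fin d) ℂ

/-- ℂ^d with its standard Hermitian norm -/
abbrev Euc (d : ℕ) := EuclideanSpace ℂ (Fin d)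

instance (d : ℕ) : MeasurableSpace (Mat d) := borel _

/-- the operator norm of a matrix, induced by the standard Hermitian norm on ℂ^d -/
def opNorm {d : ℕ} (g : Mat d) : ℝ := ‖Matrix.toEuclideanCLM (𝕜 := ℂ) g‖

/-- N(g) = max(‖g‖, ‖g⁻¹‖) -/
def matN {d : ℕ} (g : Mat d) : ℝ := max (opNorm g) (opNorm g⁻¹)

/-- μ has finite k-th moment: ∫ (log N(g))^k dμ(g) < ∞ -/
def FiniteMoment {d : ℕ} (μ : Measure (Mat d)) (k : ℕ) : Prop :=
  ∫⁻ g, ENNReal.ofReal ((Real.log (matN g)) ^ k) ∂μ < ⊤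

/-- the left product L_n = X_{n-1} ⋯ X_0 (the paper's L_n = X_n ⋯ X_1) -/
def Lprod {M Ω : Type*} [Monoid M] (X : ℕ → Ω → M) (n : ℕ) (ω : Ω) : M :=
  (((List.range n).map fun i => X i ω).reverse).prod

/-- the right product R_n = X_0 ⋯ X_{n-1} (the paper's R_n = X_1 ⋯ X_n) -/
def Rprod {M Ω : Type*} [Monoid M] (X : ℕ → Ω → M) (n : ℕ) (ω : Ω) : M :=
  ((List.range n).map fun i => X i ω).prod

/-- the action of a matrix on ℂ^d -/
def act {d : ℕ} (g : Mat d) (v : Euc d) : Euc d := Matrix.toEuclideanLin g v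

/-- the spectral radius ρ(g) of a complex matrix -/
def specRad {d : ℕ} (g : Mat d) : ℝ := (spectralRadius ℂ g).toReal

/-- the Fubini–Study distance between the projective classes of two nonzero vectors:
`δ([v],[w]) = ‖v ∧ w‖ / (‖v‖ ‖w‖)`, where `‖v ∧ w‖² = ‖v‖²‖w‖² - |⟨v,w⟩|²`. -/
def projDist {d : ℕ} (v w : Euc d) : ℝ :=
  Real.sqrt (‖v‖ ^ 2 * ‖w‖ ^ 2 - ‖(inner ℂ v w : ℂ)‖ ^ 2) / (‖v‖ * ‖w‖)

/-- the Fubini–Study distance from a projective point to the projectivization of a set of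
vectors: `δ(x,[W]) = inf_{y ∈ [W]} δ(x,y)` (with the convention that it is `1`, the diameter
of the projective space, when `[W] = ∅`). -/
def projDistSet {d : ℕ} (v : Euc d) (W : Set (Euc d)) : ℝ :=
  sInf (insert 1 (projDist v '' {w | w ∈ W ∧ w ≠ 0}))

/-- the singular values a_1(g) ≥ ... ≥ a_d(g) of g, in decreasing order (indexed from 0):
the square roots of the eigenvalues of gᴴ g, sorted decreasingly -/
def singVal {d : ℕ} (g : Mat d) (k : Fin d) : ℝ :=
  Real.sqrt ((Matrix.isHermitian_conjTranspose_mul_self g).eigenvalues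
    (Tuple.sort (Matrix.isHermitian_conjTranspose_mul_self g).eigenvalues k.rev))

/-- the moduli of the eigenvalues ρ_1(g) ≥ ... ≥ ρ_d(g) of g, in decreasing order
(indexed from 0): the moduli of the roots of the characteristic polynomial, sorted -/
def eigMod {d : ℕ} (g : Mat d) (k : Fin d) : ℝ :=
  (((g.charpoly.roots.map fun z => ‖z‖).sort (· ≤ ·)).getD (d - 1 - k) 0)

/-- the Furstenberg–Kifer–Hennion subspace L_μ (as a set of vectors), relative to the left
random walk given by `X` and the top Lyapunov exponent `lam1`:
`{0} ∪ {v ≠ 0 | a.s. limsup (1/n) log ‖L_n v‖ < λ₁}` -/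
def FKHspace {d : ℕ} {Ω : Type*} [MeasureSpace Ω] (X : ℕ → Ω → Mat d) (lam1 : ℝ) :
    Set (Euc d) :=
  {v | v = 0 ∨ ∀ᵐ ω, Filter.limsup (fun n => Real.log ‖act (Lprod X n ω) v‖ / n) atTop < lam1}

/-- the analogue of the Furstenberg–Kifer–Hennion subspace for the right random walk
given by `X`: `{0} ∪ {v ≠ 0 | a.s. limsup (1/n) log ‖X_1 ⋯ X_n v‖ < lam1}` -/
def FKHspaceR {d : ℕ} {Ω : Type*} [MeasureSpace Ω] (X : ℕ → Ω → Mat d) (lam1 : ℝ) :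
    Set (Euc d) :=
  {v | v = 0 ∨ ∀ᵐ ω, Filter.limsup (fun n => Real.log ‖act (Rprod X n ω) v‖ / n) atTop < lam1}

/-- the first standard basis vector e_1 of ℂ^d -/
def e1 {d : ℕ} (hd : 1 ≤ d) : Euc d := EuclideanSpace.single ⟨0, hd⟩ 1

/-- the repelling hyperplane associated to the KAK decomposition g = k a(g) l, namely
`H_g^< = [span(l⁻¹ e_2, ..., l⁻¹ e_d)]`, here described by the second factor `l` -/
def repHyp {d : ℕ} (hd : 1 ≤ d) (l : Mat d) : Set (Euc d) :=
  (Submodule.span ℂ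
    ((fun j : Fin d => act l⁻¹ (EuclideanSpace.single j 1)) '' {j | j ≠ ⟨0, hd⟩}) :
    Submodule ℂ (Euc d))

/-- the quotient norm on ℂ^d / L : ‖v + L‖ = inf {‖v + w‖ : w ∈ L} -/
def quotNorm {d : ℕ} (L : Set (Euc d)) (v : Euc d) : ℝ :=
  sInf ((fun w => ‖v + w‖) '' L)

end

end RMP

/-!
After the unitary changes of frame `k` and `l`, `g` becomes the diagonal matrix `a(g)` and
`x_g⁺` becomes `[e₁]`. For a diagonal matrix, `‖e₁ ∧ a(g) y‖² = ∑_{i ≥ 2} a_i² |y_i|² ≤ a₂² ‖y‖²`,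
so `δ(x_g⁺, g·[v]) ≤ a₂ ‖v‖ / ‖gv‖`, and `a₁ ≤ ‖g‖` turns this into the stated bound.
-/

namespace RMP

open Matrix Finset
open scoped Matrix.Norms.L2Operator

lemma le_div_mul_of_le_of_le {a b c : ℝ} (hb : 0 ≤ b) (hba : b ≤ a) (hac : a ≤ c) :
    b ≤ b / a * c := by
  rcases (hb.trans hba).eq_or_lt with rfl | ha
  · simp [le_antisymm hba hb]
  · rw [div_mul_eq_mul_div, le_div_iff₀ ha]
    exact mul_le_mul_of_nonneg_left hac hb

variable {d : ℕ}

lemma act_mul (A B : Mat d) (v : Euc d) : act (A * B) v = act A (act B v) := by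
  simp [act]

lemma act_diagonal_apply (c : Fin d → ℂ) (v : Euc d) (i : Fin d) :
    act (diagonal c) v i = c i * v i := by
  simp [act, mulVec_diagonal]

lemma toEuclideanCLM_mem_unitary {k : Mat d} (hk : k ∈ unitaryGroup (Fin d) ℂ) :
    toEuclideanCLM (𝕜 := ℂ) k ∈ unitary (Euc d →L[ℂ] Euc d) :=
  Unitary.map_mem _ hk

lemma norm_act_of_mem_unitaryGroup {k : Mat d} (hk : k ∈ unitaryGroup (Fin d) ℂ) (x : Euc d) :
    ‖act k x‖ = ‖x‖ :=
  (toEuclideanCLM (𝕜 := ℂ) k).norm_map_of_mem_unitary (toEuclideanCLM_mem_unitary hk) x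

lemma inner_act_act_of_mem_unitaryGroup {k : Mat d} (hk : k ∈ unitaryGroup (Fin d) ℂ)
    (x y : Euc d) : inner ℂ (act k x) (act k y) = inner ℂ x y :=
  (toEuclideanCLM (𝕜 := ℂ) k).inner_map_map_of_mem_unitary (toEuclideanCLM_mem_unitary hk) x y

lemma projDist_act_act_of_mem_unitaryGroup {k : Mat d} (hk : k ∈ unitaryGroup (Fin d) ℂ)
    (x y : Euc d) : projDist (act k x) (act k y) = projDist x y := by
  simp only [projDist, norm_act_of_mem_unitaryGroup hk, inner_act_act_of_mem_unitaryGroup hk]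

lemma projDist_single_one (i : Fin d) (z : Euc d) :
    projDist (EuclideanSpace.single i 1) z = √(∑ j ∈ univ.erase i, ‖z j‖ ^ 2) / ‖z‖ := by
  have hsingle : ‖EuclideanSpace.single i (1 : ℂ)‖ = 1 := by simp
  rw [projDist, hsingle, EuclideanSpace.inner_single_left, EuclideanSpace.norm_sq_eq,
    ← add_sum_erase _ _ (mem_univ i)]
  simp

lemma projDist_single_one_act_diagonal_le {c : Fin d → ℂ} {i : Fin d} {b : ℝ} (hb : 0 ≤ b)
    (hc : ∀ j ≠ i, ‖c j‖ ≤ b) (y : Euc d) :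
    projDist (EuclideanSpace.single i 1) (act (diagonal c) y)
      ≤ b * ‖y‖ / ‖act (diagonal c) y‖ := by
  rw [projDist_single_one]
  gcongr
  have htail : ∑ j ∈ univ.erase i, ‖act (diagonal c) y j‖ ^ 2 ≤ (b * ‖y‖) ^ 2 :=
    calc ∑ j ∈ univ.erase i, ‖act (diagonal c) y j‖ ^ 2
        ≤ ∑ j ∈ univ.erase i, b ^ 2 * ‖y j‖ ^ 2 := by
          gcongr with j hj
          rw [act_diagonal_apply, norm_mul, mul_pow]
          gcongr
          exact hc j (ne_of_mem_erase hj)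
      _ ≤ ∑ j, b ^ 2 * ‖y j‖ ^ 2 := sum_le_sum_of_subset_of_nonneg (erase_subset _ _)
          fun _ _ _ ↦ by positivity
      _ = (b * ‖y‖) ^ 2 := by rw [← mul_sum, ← EuclideanSpace.norm_sq_eq, mul_pow]
  exact (Real.sqrt_le_sqrt htail).trans_eq (Real.sqrt_sq (by positivity))

lemma norm_le_opNorm_mul_diagonal_mul {k l : Mat d} (hk : k ∈ unitaryGroup (Fin d) ℂ)
    (hl : l ∈ unitaryGroup (Fin d) ℂ) (c : Fin d → ℂ) (i : Fin d) :
    ‖c i‖ ≤ opNorm (k * diagonal c * l) := by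
  rw [opNorm, l2_opNorm_toEuclideanCLM, CStarRing.norm_mul_mem_unitary _ hl,
    CStarRing.norm_mem_unitary_mul _ hk, l2_opNorm_diagonal]
  exact norm_le_pi_norm c i

lemma singVal_nonneg (g : Mat d) (i : Fin d) : 0 ≤ singVal g i := Real.sqrt_nonneg _

lemma singVal_antitone (g : Mat d) : Antitone (singVal g) := fun _ _ hij ↦
  Real.sqrt_le_sqrt <|
    Tuple.monotone_sort (isHermitian_conjTranspose_mul_self g).eigenvalues (Fin.rev_le_rev.2 hij)

lemma norm_singVal (g : Mat d) (i : Fin d) : ‖(singVal g i : ℂ)‖ = singVal g i := by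
  rw [Complex.norm_real, Real.norm_of_nonneg (singVal_nonneg g i)]

lemma singVal_le_singVal_one (g : Mat d) (h1 : 1 < d) {j : Fin d} (hj : j.val ≠ 0) :
    singVal g j ≤ singVal g ⟨1, h1⟩ :=
  singVal_antitone g (Fin.le_def.2 (Nat.one_le_iff_ne_zero.2 hj))

lemma singVal_le_opNorm {g k l : Mat d} (hk : k ∈ unitaryGroup (Fin d) ℂ)
    (hl : l ∈ unitaryGroup (Fin d) ℂ) (hKAK : g = k * diagonal (fun i => (singVal g i : ℂ)) * l)
    (i : Fin d) : singVal g i ≤ opNorm g := by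
  rw [← norm_singVal]
  nth_rw 2 [hKAK]
  exact norm_le_opNorm_mul_diagonal_mul hk hl (fun i => (singVal g i : ℂ)) i

/-- **Deterministic contraction estimate** (Aoun–Sert, inequality (3.1)): for every
g ∈ GL_d(ℂ) and every nonzero v ∈ ℂ^d,
δ(x_g⁺, g·[v]) ≤ (a₂(g)/a₁(g)) · ‖g‖‖v‖/‖gv‖,
for any KAK (singular value) decomposition g = k a(g) l defining x_g⁺ = [k e₁]. -/
theorem deterministic_contraction_estimate
    (d : ℕ) (hd : 2 ≤ d)
    (g : Mat d)
    (k l : Mat d)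
    (hk : k ∈ Matrix.unitaryGroup (Fin d) ℂ) (hl : l ∈ Matrix.unitaryGroup (Fin d) ℂ)
    (hKAK : g = k * Matrix.diagonal (fun i => (singVal g i : ℂ)) * l)
    (v : Euc d) :
    projDist (act k (e1 (by omega))) (act g v)
      ≤ (singVal g ⟨1, by omega⟩ / singVal g ⟨0, by omega⟩)
          * (opNorm g * ‖v‖ / ‖act g v‖) := by
  set a := singVal g
  set D : Mat d := diagonal fun i => (a i : ℂ)
  have hgv : act g v = act k (act D (act l v)) := by rw [← act_mul, ← act_mul, ← hKAK]
  have htail : ∀ j ≠ ⟨0, by omega⟩, ‖(a j : ℂ)‖ ≤ a ⟨1, by omega⟩ := fun j hj ↦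
    (norm_singVal g j).trans_le (singVal_le_singVal_one g (by omega) (Fin.val_ne_iff.2 hj))
  have hratio : a ⟨1, by omega⟩ ≤ a ⟨1, by omega⟩ / a ⟨0, by omega⟩ * opNorm g :=
    le_div_mul_of_le_of_le (singVal_nonneg g _) (singVal_antitone g (by simp [Fin.le_def]))
      (singVal_le_opNorm hk hl hKAK _)
  calc projDist (act k (e1 _)) (act g v)
      = projDist (e1 _) (act D (act l v)) := by
        rw [hgv, projDist_act_act_of_mem_unitaryGroup hk]
    _ ≤ a ⟨1, by omega⟩ * ‖act l v‖ / ‖act D (act l v)‖ :=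
        projDist_single_one_act_diagonal_le (singVal_nonneg g _) htail _
    _ = a ⟨1, by omega⟩ * (‖v‖ / ‖act g v‖) := by
        rw [hgv, norm_act_of_mem_unitaryGroup hk, norm_act_of_mem_unitaryGroup hl, mul_div_assoc]
    _ ≤ a ⟨1, by omega⟩ / a ⟨0, by omega⟩ * opNorm g * (‖v‖ / ‖act g v‖) := by gcongr
    _ = _ := by ring

end RMP
end

section
/- Failure of the law of large numbers for the spectral radius for Markovian increments: let a = diag(3, 1, 1/3) ∈ SL_3(ℝ), let σ ∈ SL_3(ℝ) be the permutation matrix with σe_1 = e_2, σe_2 = e_3, σe_3 = e_1, and let ω ∈ SL_3(ℝ) be the permutation matrix with ωe_1 = e_3, ωe_2 = e_1, ωe_3 = e_2. Let (X_n)_{n≥1} be the Markov chain on the state space {a, σ, ω} with transition probabilities P(a,a) = 1/2, P(a,σ) = 1/2, P(σ,ω) = 1, P(ω,a) = 1 (all other transitions having probability 0), with initial distribution the stationary measure m = (1/2)δ_a + (1/4)δ_σ + (1/4)δ_ω, and let L_n = X_n ⋯ X_1. Then almost surely liminf_n (1/n) log ρ(L_n) = 0 and limsup_n (1/n) log ρ(L_n)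 ≥ (1/3) log 3 > 0; in particular (1/n) log ρ(L_n) does not converge almost surely. -/
open MeasureTheory ProbabilityTheory Filter Real Topology

namespace RMP

noncomputable section

instance : MeasurableSpace (Matrix (Fin 3) (Fin 3) ℝ) := borel _

/-- the spectral radius of a real matrix: the maximum of the moduli of its (complex)
eigenvalues, i.e. the spectral radius of its complexification -/
def specRadR (g : Matrix (Fin 3) (Fin 3) ℝ) : ℝ :=
  (spectralRadius ℂ (g.map fun x => (x : ℂ))).toReal

/-- the diagonal matrix a = diag(3, 1, 1/3) -/
def mA : Matrix (Fin 3) (Fin 3) ℝ := !![3, 0, 0; 0, 1, 0; 0, 0, 1/3]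

/-- the cyclic permutation matrix σ, with σe₁ = e₂, σe₂ = e₃, σe₃ = e₁ -/
def mS : Matrix (Fin 3) (Fin 3) ℝ := !![0, 0, 1; 1, 0, 0; 0, 1, 0]

/-- the cyclic permutation matrix ω, with ωe₁ = e₃, ωe₂ = e₁, ωe₃ = e₂ -/
def mW : Matrix (Fin 3) (Fin 3) ℝ := !![0, 1, 0; 0, 0, 1; 1, 0, 0]

/-- the stationary initial distribution m = (1/2)δ_a + (1/4)δ_σ + (1/4)δ_ω -/
def m0 (g : Matrix (Fin 3) (Fin 3) ℝ) : ℝ :=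
  if g = mA then 1/2 else if g = mS then 1/4 else if g = mW then 1/4 else 0

/-- the transition probabilities: P(a,a) = 1/2, P(a,σ) = 1/2, P(σ,ω) = 1, P(ω,a) = 1,
all other transitions having probability 0 -/
def trans (g h : Matrix (Fin 3) (Fin 3) ℝ) : ℝ :=
  if g = mA ∧ h = mA then 1/2 else if g = mA ∧ h = mS then 1/2
    else if g = mS ∧ h = mW then 1 else if g = mW ∧ h = mA then 1 else 0

end


/-!
Along an admissible path the chain only moves `a → a`, `a → σ → ω → a`, and `ωσ = 1`, so the
product collapses to `L_{n+1} = σ^ε a^K ω^η`, where `K` counts the `a`'s among `X_0, …, X_n`,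
`ε = [X_n = σ]` and `η = [X_0 = ω]`. Now `σ a^K ω = σ a^K σ⁻¹` has spectral radius `3^K`, whereas
`σ a^K` and `a^K ω` have cube `1`; hence `ρ(L_{n+1})` is `3^K` if `ε = η` and `1` otherwise.
Almost surely the path is admissible and leaves `a` infinitely often, hence visits `σ` infinitely
often, and `ε` flips between the times `n` and `n + 1` of each visit `X_n = σ`, `X_{n+1} = ω`: both
values of `ρ` occur infinitely often. As every third letter is an `a`, `K ≥ n/3 - 1`, which gives
`liminf = 0` and `limsup ≥ log 3 / 3`.
-/

open Matrix Finset

theorem spectralRadius_diagonal {n : Type*} [Fintype n] [DecidableEq n] (d : n → ℂ) :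
    spectralRadius ℂ (diagonal d) = ⨆ i, (‖d i‖₊ : ENNReal) := by
  rw [spectralRadius, spectrum_diagonal, iSup_range]

theorem spectralRadius_eq_one_of_pow_eq_one {𝕜 A : Type*} [NormedField 𝕜] [IsAlgClosed 𝕜]
    [Ring A] [Nontrivial A] [Algebra 𝕜 A] [FiniteDimensional 𝕜 A] {a : A} {k : ℕ}
    (hk : k ≠ 0) (h : a ^ k = 1) : spectralRadius 𝕜 a = 1 := by
  have hnorm : ∀ z ∈ spectrum 𝕜 a, (‖z‖₊ : ENNReal) = 1 := by
    intro z hz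
    have hzk : z ^ k ∈ spectrum 𝕜 (a ^ k) := spectrum.pow_image_subset a k ⟨z, hz, rfl⟩
    rw [h, spectrum.one_eq, Set.mem_singleton_iff] at hzk
    have : ‖z‖₊ ^ k = 1 := by rw [← nnnorm_pow, hzk, nnnorm_one]
    rw [(pow_eq_one_iff_of_nonneg zero_le hk).1 this, ENNReal.coe_one]
  obtain ⟨z, hz⟩ := spectrum.nonempty_of_isAlgClosed_of_finiteDimensional 𝕜 a
  refine le_antisymm (iSup₂_le fun z hz => (hnorm z hz).le) ?_
  exact hnorm z hz ▸ le_iSup₂ (f := fun z (_ : z ∈ spectrum 𝕜 a) => (‖z‖₊ : ENNReal)) z hz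

theorem liminf_eq_of_frequently_eq {u : ℕ → ℝ} {a b : ℝ} (hu : ∀ n, u n ∈ Set.Icc a b)
    (h : ∃ᶠ n in atTop, u n = a) : liminf u atTop = a :=
  le_antisymm (liminf_le_of_frequently_le (h.mono fun _ hn => hn.le)
      (isBoundedUnder_of ⟨a, fun n => (hu n).1⟩))
    (le_liminf_of_le (isBoundedUnder_of ⟨b, fun n => (hu n).2⟩).isCoboundedUnder_ge
      (.of_forall fun n => (hu n).1))

theorem le_limsup_of_frequently_le_of_tendsto {u v : ℕ → ℝ} {b c : ℝ}
    (hv : Tendsto v atTop (𝓝 c)) (hvu : ∃ᶠ n in atTop, v n ≤ u n) (hu : ∀ n, u n ≤ b) :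
    c ≤ limsup u atTop :=
  hv.liminf_eq ▸ liminf_le_limsup_of_frequently_le hvu hv.isBoundedUnder_ge
    (isBoundedUnder_of ⟨b, hu⟩)

theorem measure_le_natCard_mul {Ω ι : Type*} [MeasurableSpace Ω] [Finite ι] (μ : Measure Ω)
    (φ : Ω → ι) {E : Set Ω} {δ : ENNReal} (h : ∀ ω₀ ∈ E, μ (E ∩ φ ⁻¹' {φ ω₀}) ≤ δ) :
    μ E ≤ Nat.card ι * δ := by
  have := Fintype.ofFinite ι
  calc μ E ≤ ∑ y, μ (E ∩ φ ⁻¹' {y}) :=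
        (measure_mono fun ω hω => Set.mem_iUnion.2 ⟨φ ω, (⟨hω, rfl⟩ : ω ∈ E ∩ φ ⁻¹' {φ ω})⟩).trans
          (measure_iUnion_fintype_le μ _)
    _ ≤ ∑ _y : ι, δ := by
        gcongr with y
        rcases (E ∩ φ ⁻¹' {y}).eq_empty_or_nonempty with he | ⟨ω₀, hω₀, rfl⟩
        · simp [he]
        · exact h ω₀ hω₀
    _ = Nat.card ι * δ := by simp [Nat.card_eq_fintype_card]

lemma Lprod_zero {M Ω : Type*} [Monoid M] (X : ℕ → Ω → M) (ω : Ω) : Lprod X 0 ω = 1 := rfl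

lemma Lprod_succ {M Ω : Type*} [Monoid M] (X : ℕ → Ω → M) (n : ℕ) (ω : Ω) :
    Lprod X (n + 1) ω = X n ω * Lprod X n ω := by
  simp [Lprod, List.range_succ]

abbrev complexify : Matrix (Fin 3) (Fin 3) ℝ →+* Matrix (Fin 3) (Fin 3) ℂ :=
  Complex.ofRealHom.mapMatrix

lemma specRadR_def (g : Matrix (Fin 3) (Fin 3) ℝ) :
    specRadR g = (spectralRadius ℂ (complexify g)).toReal := rfl

lemma specRadR_of_pow_eq_one {g : Matrix (Fin 3) (Fin 3) ℝ} {k : ℕ} (hk : k ≠ 0)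
    (h : g ^ k = 1) : specRadR g = 1 := by
  rw [specRadR_def, spectralRadius_eq_one_of_pow_eq_one hk (by rw [← map_pow, h, map_one]),
    ENNReal.toReal_one]

lemma specRadR_conj {u v g : Matrix (Fin 3) (Fin 3) ℝ} (huv : u * v = 1) (hvu : v * u = 1) :
    specRadR (u * g * v) = specRadR g := by
  let U : (Matrix (Fin 3) (Fin 3) ℂ)ˣ := ⟨complexify u, complexify v,
    by rw [← map_mul, huv, map_one], by rw [← map_mul, hvu, map_one]⟩
  have hspec : spectrum ℂ (complexify (u * g * v)) = spectrum ℂ (complexify g) := by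
    simpa [U] using spectrum.units_conjugate (R := ℂ) (a := complexify g) (u := U)
  simp only [specRadR_def, spectralRadius, hspec]

lemma mA_pow (K : ℕ) : mA ^ K = diagonal ![3 ^ K, 1, 3⁻¹ ^ K] := by
  have : mA = diagonal ![3, 1, 3⁻¹] := by
    rw [mA, diagonal_fin_three]; simp [one_div]
  rw [this, diagonal_pow]
  congr 1
  ext i; fin_cases i <;> simp

lemma specRadR_mA_pow (K : ℕ) : specRadR (mA ^ K) = 3 ^ K := by
  have hmap : complexify (mA ^ K) = diagonal ![(3 : ℂ) ^ K, 1, 3⁻¹ ^ K] := by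
    rw [mA_pow, RingHom.mapMatrix_apply, diagonal_map (map_zero _)]
    congr 1; ext i; fin_cases i <;> simp
  have hsup : ⨆ i, (‖![(3 : ℂ) ^ K, 1, 3⁻¹ ^ K] i‖₊ : ENNReal) = ((3 : NNReal) ^ K : NNReal) := by
    refine le_antisymm (iSup_le fun i => ?_) (le_iSup_of_le 0 (by simp))
    have h1 : (1 : ENNReal) ≤ 3 ^ K := one_le_pow₀ (by norm_num)
    fin_cases i <;> simp [h1, (ENNReal.inv_le_one.2 h1).trans h1]
  rw [specRadR_def, hmap, spectralRadius_diagonal, hsup]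
  simp

lemma mW_mul_mS : mW * mS = 1 := by
  rw [mW, mS, mul_fin_three, one_fin_three]; norm_num

lemma mS_mul_mW : mS * mW = 1 := by
  rw [mW, mS, mul_fin_three, one_fin_three]; norm_num

lemma mS_mul_mA_pow_pow_three (K : ℕ) : (mS * mA ^ K) ^ 3 = 1 := by
  rw [mA_pow, diagonal_fin_three, pow_three, mS, mul_fin_three, mul_fin_three, mul_fin_three,
    one_fin_three]
  simp

lemma mA_pow_mul_mW_pow_three (K : ℕ) : (mA ^ K * mW) ^ 3 = 1 := by
  rw [mA_pow, diagonal_fin_three, pow_three, mW, mul_fin_three, mul_fin_three, mul_fin_three,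
    one_fin_three]
  simp

lemma specRadR_ite_mul_mA_pow_mul_ite (p q : Prop) [Decidable p] [Decidable q] (K : ℕ) :
    specRadR ((if p then mS else 1) * mA ^ K * (if q then mW else 1)) =
      if (p ↔ q) then 3 ^ K else 1 := by
  by_cases hp : p <;> by_cases hq : q <;> simp only [hp, hq, if_true, if_false, iff_self,
    true_iff, iff_true, mul_one, one_mul]
  · rw [specRadR_conj mS_mul_mW mW_mul_mS, specRadR_mA_pow]
  · exact specRadR_of_pow_eq_one three_ne_zero (mS_mul_mA_pow_pow_three K)
  · exact specRadR_of_pow_eq_one three_ne_zero (mA_pow_mul_mW_pow_three K)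
  · exact specRadR_mA_pow K

lemma mA_ne_mS : mA ≠ mS := fun h => by simpa [mA, mS] using congr_fun (congr_fun h 0) 0

lemma mA_ne_mW : mA ≠ mW := fun h => by simpa [mA, mW] using congr_fun (congr_fun h 0) 0

lemma mS_ne_mW : mS ≠ mW := fun h => by simpa [mS, mW] using congr_fun (congr_fun h 0) 1

lemma trans_ne_zero_cases {g h : Matrix (Fin 3) (Fin 3) ℝ} (hgh : trans g h ≠ 0) :
    (g = mA ∧ (h = mA ∨ h = mS)) ∨ (g = mS ∧ h = mW) ∨ (g = mW ∧ h = mA) := by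
  unfold trans at hgh
  split_ifs at hgh <;> tauto

lemma frequently_and_frequently_not_of_frequently_iff_not_succ {p : ℕ → Prop}
    (h : ∃ᶠ i in atTop, (p i ↔ ¬p (i + 1))) : (∃ᶠ n in atTop, p n) ∧ ∃ᶠ n in atTop, ¬p n := by
  simp only [frequently_atTop] at h ⊢
  constructor <;> intro N <;> obtain ⟨i, hi, hpi⟩ := h N <;> by_cases hp : p i
  · exact ⟨i, hi, hp⟩
  · exact ⟨i + 1, by omega, not_not.1 (mt hpi.2 hp)⟩
  · exact ⟨i + 1, by omega, hpi.1 hp⟩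
  · exact ⟨i, hi, hp⟩

section Path

variable {Ω : Type*} {X : ℕ → Ω → Matrix (Fin 3) (Fin 3) ℝ} {ω : Ω}

variable (X ω) in
noncomputable def countA (n : ℕ) : ℕ := #{i ∈ range n | X i ω = mA}

lemma countA_zero : countA X ω 0 = 0 := rfl

lemma countA_succ (n : ℕ) :
    countA X ω (n + 1) = countA X ω n + if X n ω = mA then 1 else 0 := by
  simp only [countA, card_filter, sum_range_succ]

lemma countA_le (n : ℕ) : countA X ω n ≤ n :=
  (card_filter_le _ _).trans (card_range n).le

variable (hR : ∀ i, trans (X i ω) (X (i + 1) ω) ≠ 0)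
include hR

lemma eq_mW_of_eq_mS {i : ℕ} (h : X i ω = mS) : X (i + 1) ω = mW := by
  rcases trans_ne_zero_cases (hR i) with ⟨h', _⟩ | ⟨_, h'⟩ | ⟨h', _⟩
  · exact absurd (h'.symm.trans h) mA_ne_mS
  · exact h'
  · exact absurd (h.symm.trans h') mS_ne_mW

lemma countA_add_three (n : ℕ) : countA X ω n + 1 ≤ countA X ω (n + 3) := by
  have hA : X n ω = mA ∨ X (n + 1) ω = mA ∨ X (n + 1 + 1) ω = mA := by
    rcases trans_ne_zero_cases (hR n) with ⟨h, _⟩ | ⟨_, h⟩ | ⟨_, h⟩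
    · exact .inl h
    · rcases trans_ne_zero_cases (hR (n + 1)) with ⟨h', _⟩ | ⟨h', _⟩ | ⟨_, h'⟩
      · exact absurd (h'.symm.trans h) mA_ne_mW
      · exact absurd (h'.symm.trans h) mS_ne_mW
      · exact .inr (.inr h')
    · exact .inr (.inl h)
  simp only [countA_succ]
  rcases hA with h | h | h <;> simp only [h, if_true] <;> split_ifs <;> omega

lemma le_three_mul_countA_add_three (n : ℕ) : n ≤ 3 * countA X ω n + 3 := by
  induction n using Nat.strong_induction_on with
  | _ n ih =>
    obtain hn | ⟨k, rfl⟩ : n < 3 ∨ ∃ k, n = k + 3 := by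
      by_cases h : n < 3
      · exact .inl h
      · exact .inr ⟨n - 3, by omega⟩
    · omega
    · have := ih k (by omega)
      have := countA_add_three hR k
      omega

lemma one_third_sub_inv_le_countA_div {n : ℕ} (hn : 0 < n) :
    1 / 3 - 1 / (n : ℝ) ≤ countA X ω n / n := by
  have hn' : (0 : ℝ) < n := by exact_mod_cast hn
  have hK : (n : ℝ) ≤ 3 * countA X ω n + 3 := by
    exact_mod_cast le_three_mul_countA_add_three hR n
  rw [le_div_iff₀ hn']
  calc (1 / 3 - 1 / (n : ℝ)) * n = n / 3 - 1 := by field_simp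
    _ ≤ countA X ω n := by linarith

lemma Lprod_succ_eq (n : ℕ) :
    Lprod X (n + 1) ω =
      (if X n ω = mS then mS else 1) * mA ^ countA X ω (n + 1) *
        (if X 0 ω = mW then mW else 1) := by
  induction n with
  | zero =>
    rcases trans_ne_zero_cases (hR 0) with ⟨h, _⟩ | ⟨h, _⟩ | ⟨h, _⟩ <;>
      simp [Lprod_succ, Lprod_zero, countA_succ, countA_zero, h, mA_ne_mS, mA_ne_mW,
        mA_ne_mS.symm, mA_ne_mW.symm, mS_ne_mW, mS_ne_mW.symm]
  | succ n ih =>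
    rw [Lprod_succ, ih, countA_succ (n + 1)]
    rcases trans_ne_zero_cases (hR n) with ⟨h, h' | h'⟩ | ⟨h, h'⟩ | ⟨h, h'⟩
    · simp [h, h', mA_ne_mS, pow_succ', mul_assoc]
    · simp [h, h', mA_ne_mS, mA_ne_mS.symm, mul_assoc]
    · simp [h, h', mA_ne_mW.symm, mS_ne_mW.symm, ← mul_assoc, mW_mul_mS]
    · simp [h, h', mA_ne_mS, mS_ne_mW.symm, pow_succ', mul_assoc]

lemma specRadR_Lprod_succ (n : ℕ) :
    specRadR (Lprod X (n + 1) ω) =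
      if (X n ω = mS ↔ X 0 ω = mW) then 3 ^ countA X ω (n + 1) else 1 := by
  rw [Lprod_succ_eq hR, specRadR_ite_mul_mA_pow_mul_ite]

lemma specRadR_Lprod_eq_one_or (n : ℕ) :
    specRadR (Lprod X n ω) = 1 ∨ specRadR (Lprod X n ω) = 3 ^ countA X ω n := by
  cases n with
  | zero => exact .inr (by simpa [Lprod_zero, countA_zero] using specRadR_mA_pow 0)
  | succ n => rw [specRadR_Lprod_succ hR]; split_ifs <;> simp

lemma log_specRadR_Lprod_div_mem_Icc (n : ℕ) :
    Real.log (specRadR (Lprod X n ω)) / n ∈ Set.Icc 0 (Real.log 3) := by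
  have hlog3 : 0 ≤ Real.log 3 := Real.log_nonneg (by norm_num)
  rcases specRadR_Lprod_eq_one_or hR n with h | h
  · simpa [h] using hlog3
  · rw [h, Real.log_pow]
    refine ⟨by positivity, div_le_of_le_mul₀ (Nat.cast_nonneg n) hlog3 ?_⟩
    rw [mul_comm]
    gcongr
    exact_mod_cast countA_le (X := X) (ω := ω) n

lemma frequently_eq_mS (hA : ∃ᶠ i in atTop, X i ω ≠ mA) : ∃ᶠ i in atTop, X i ω = mS := by
  rw [frequently_atTop] at hA ⊢
  intro N
  obtain ⟨i, hi, hne⟩ := hA (N + 1)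
  obtain ⟨j, rfl⟩ : ∃ j, i = j + 1 := ⟨i - 1, by omega⟩
  rcases trans_ne_zero_cases (hR j) with ⟨_, h | h⟩ | ⟨h, _⟩ | ⟨_, h⟩
  · exact absurd h hne
  · exact ⟨j + 1, by omega, h⟩
  · exact ⟨j, by omega, h⟩
  · exact absurd h hne

lemma frequently_specRadR_Lprod (hA : ∃ᶠ i in atTop, X i ω ≠ mA) :
    (∃ᶠ n in atTop, specRadR (Lprod X n ω) = 1) ∧
      ∃ᶠ n in atTop, specRadR (Lprod X n ω) = 3 ^ countA X ω n := by
  have hflip : ∃ᶠ i in atTop, (X i ω = mS ↔ X 0 ω = mW) ↔ ¬(X (i + 1) ω = mS ↔ X 0 ω = mW) :=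
    (frequently_eq_mS hR hA).mono fun i h => by simp [h, eq_mW_of_eq_mS hR h, mS_ne_mW.symm]
  obtain ⟨hpow, hone⟩ := frequently_and_frequently_not_of_frequently_iff_not_succ hflip
  constructor <;> refine (tendsto_add_atTop_nat 1).frequently ?_
  · exact hone.mono fun n h => by rw [specRadR_Lprod_succ hR, if_neg h]
  · exact hpow.mono fun n h => by rw [specRadR_Lprod_succ hR, if_pos h]

end Path

lemma m0_le_one (g : Matrix (Fin 3) (Fin 3) ℝ) : m0 g ≤ 1 := by
  unfold m0; split_ifs <;> norm_num

lemma trans_nonneg (g h : Matrix (Fin 3) (Fin 3) ℝ) : 0 ≤ trans g h := by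
  unfold trans; split_ifs <;> norm_num

lemma trans_le_one (g h : Matrix (Fin 3) (Fin 3) ℝ) : trans g h ≤ 1 := by
  unfold trans; split_ifs <;> norm_num

lemma m0_mul_prod_trans_le_of_eq_mA {w : ℕ → Matrix (Fin 3) (Fin 3) ℝ} {m : ℕ}
    (hw : ∀ i ≥ m, w i = mA) (n : ℕ) :
    m0 (w 0) * ∏ i ∈ range (m + n), trans (w i) (w (i + 1)) ≤ (1 / 2) ^ n := by
  have htail : ∀ i ∈ range n, trans (w (m + i)) (w (m + i + 1)) = 1 / 2 := fun i _ => by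
    simp [hw (m + i) (by omega), hw (m + i + 1) (by omega), trans]
  rw [prod_range_add, prod_congr rfl htail, prod_const, card_range]
  have hprefix : ∏ i ∈ range m, trans (w i) (w (i + 1)) ≤ 1 :=
    prod_le_one (fun _ _ => trans_nonneg _ _) (fun _ _ => trans_le_one _ _)
  calc m0 (w 0) * ((∏ i ∈ range m, trans (w i) (w (i + 1))) * (1 / 2) ^ n)
      ≤ 1 * (1 * (1 / 2) ^ n) := by
        gcongr
        · exact mul_nonneg (prod_nonneg fun _ _ => trans_nonneg _ _) (by positivity)
        · exact m0_le_one _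
    _ = (1 / 2) ^ n := by ring

section Markov

variable {Ω : Type*} {X : ℕ → Ω → Matrix (Fin 3) (Fin 3) ℝ}

def statePrefix (hstates : ∀ n ω, X n ω ∈ ({mA, mS, mW} : Set (Matrix (Fin 3) (Fin 3) ℝ)))
    (n : ℕ) (ω : Ω) : Fin n → ({mA, mS, mW} : Set (Matrix (Fin 3) (Fin 3) ℝ)) :=
  fun i => ⟨X i ω, hstates i ω⟩

lemma eq_of_statePrefix_eq
    {hstates : ∀ n ω, X n ω ∈ ({mA, mS, mW} : Set (Matrix (Fin 3) (Fin 3) ℝ))}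
    {n : ℕ} {ω ω₀ : Ω} (h : statePrefix hstates n ω = statePrefix hstates n ω₀) {j : ℕ}
    (hj : j < n) : X j ω = X j ω₀ :=
  congrArg Subtype.val (congrFun h ⟨j, hj⟩)

variable [MeasureSpace Ω]
  (hstates : ∀ n ω, X n ω ∈ ({mA, mS, mW} : Set (Matrix (Fin 3) (Fin 3) ℝ)))
  (hMarkov : ∀ (n : ℕ) (w : ℕ → Matrix (Fin 3) (Fin 3) ℝ),
    ℙ {ω | ∀ i ≤ n, X i ω = w i} =
      ENNReal.ofReal (m0 (w 0) * ∏ i ∈ Finset.range n, trans (w i) (w (i + 1))))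
include hstates hMarkov

lemma measure_trans_eq_zero (i : ℕ) : ℙ {ω | trans (X i ω) (X (i + 1) ω) = 0} = 0 := by
  refine nonpos_iff_eq_zero.1 ((measure_le_natCard_mul ℙ (statePrefix hstates (i + 2))
    fun ω₀ hω₀ => ?_).trans (mul_zero _).le)
  calc _ ≤ ℙ {ω | ∀ j ≤ i + 1, X j ω = X j ω₀} := measure_mono fun ω hω j hj =>
          eq_of_statePrefix_eq hω.2 (by omega)
    _ = 0 := by
        rw [hMarkov, prod_eq_zero (f := fun j => trans (X j ω₀) (X (j + 1) ω₀))
          (self_mem_range_succ i) hω₀, mul_zero, ENNReal.ofReal_zero]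

lemma measure_forall_ge_eq_mA (m : ℕ) : ℙ {ω | ∀ i ≥ m, X i ω = mA} = 0 := by
  set E := {ω | ∀ i ≥ m, X i ω = mA}
  obtain ⟨C, hC, hbound⟩ : ∃ C : ENNReal, C ≠ ⊤ ∧ ∀ n : ℕ, ℙ E ≤ C * 2⁻¹ ^ n := by
    refine ⟨_, ENNReal.natCast_ne_top _, fun n =>
      measure_le_natCard_mul ℙ (statePrefix hstates m) fun ω₀ hω₀ => ?_⟩
    calc _ ≤ ℙ {ω | ∀ j ≤ m + n, X j ω = X j ω₀} := measure_mono fun ω hω j _ => by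
            by_cases hj : j < m
            · exact eq_of_statePrefix_eq hω.2 hj
            · rw [hω.1 j (by omega), hω₀ j (by omega)]
      _ ≤ 2⁻¹ ^ n := by
          rw [hMarkov, ← ENNReal.ofReal_ofNat 2, ← ENNReal.ofReal_inv_of_pos two_pos,
            ← ENNReal.ofReal_pow (by norm_num)]
          exact ENNReal.ofReal_le_ofReal (by simpa using m0_mul_prod_trans_le_of_eq_mA hω₀ n)
  have hlim := ENNReal.Tendsto.const_mul
    (ENNReal.tendsto_pow_atTop_nhds_zero_of_lt_one (r := 2⁻¹) (by norm_num)) (.inr hC)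
  exact nonpos_iff_eq_zero.1 (ge_of_tendsto' (by simpa using hlim) hbound)

lemma ae_trans_ne_zero : ∀ᵐ ω, ∀ i, trans (X i ω) (X (i + 1) ω) ≠ 0 :=
  ae_all_iff.2 fun i => by simpa [ae_iff] using measure_trans_eq_zero hstates hMarkov i

lemma ae_frequently_ne_mA : ∀ᵐ ω, ∃ᶠ i in atTop, X i ω ≠ mA := by
  simp only [ae_iff, not_frequently, not_not, eventually_atTop, Set.ofPred_exists]
  exact measure_iUnion_null (measure_forall_ge_eq_mA hstates hMarkov)

end Markov

theorem markovian_failure_of_LLN_spectral_radius_general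
    {Ω : Type*} [MeasureSpace Ω] [IsProbabilityMeasure (ℙ : Measure Ω)]
    (X : ℕ → Ω → Matrix (Fin 3) (Fin 3) ℝ)
    (hstates : ∀ n ω, X n ω ∈ ({mA, mS, mW} : Set (Matrix (Fin 3) (Fin 3) ℝ)))
    -- the finite-dimensional distributions of the stationary Markov chain:
    (hMarkov : ∀ (n : ℕ) (w : ℕ → Matrix (Fin 3) (Fin 3) ℝ),
      ℙ {ω | ∀ i ≤ n, X i ω = w i} =
        ENNReal.ofReal (m0 (w 0) * ∏ i ∈ Finset.range n, trans (w i) (w (i + 1)))) :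
    (0:ℝ) < (1/3) * Real.log 3
    ∧ ∀ᵐ ω,
        Filter.liminf (fun n => Real.log (specRadR (Lprod X n ω)) / n) atTop = 0
        ∧ (1/3) * Real.log 3
            ≤ Filter.limsup (fun n => Real.log (specRadR (Lprod X n ω)) / n) atTop
        ∧ ¬ ∃ c : ℝ, Tendsto (fun n => Real.log (specRadR (Lprod X n ω)) / n)
              atTop (𝓝 c) := by
  refine ⟨by positivity, ?_⟩
  filter_upwards [ae_trans_ne_zero hstates hMarkov, ae_frequently_ne_mA hstates hMarkov]
    with ω hR hA
  obtain ⟨hone, hpow⟩ := frequently_specRadR_Lprod hR hA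
  have hmem := log_specRadR_Lprod_div_mem_Icc hR
  have hliminf := liminf_eq_of_frequently_eq hmem (hone.mono fun n h => by simp [h])
  have hlim : Tendsto (fun n : ℕ => (1 / 3 - 1 / (n : ℝ)) * Real.log 3) atTop
      (𝓝 ((1 / 3) * Real.log 3)) := by
    simpa using (tendsto_const_nhds.sub tendsto_one_div_atTop_nhds_zero_nat).mul_const (Real.log 3)
  have hlimsup := le_limsup_of_frequently_le_of_tendsto hlim
    ((hpow.and_eventually (eventually_gt_atTop 0)).mono fun n ⟨h, hn⟩ => by
      rw [h, Real.log_pow, mul_div_right_comm]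
      gcongr
      exact one_third_sub_inv_le_countA_div hR hn) fun n => (hmem n).2
  refine ⟨hliminf, hlimsup, fun ⟨c, hc⟩ => ?_⟩
  rw [hc.liminf_eq] at hliminf
  rw [hc.limsup_eq, hliminf] at hlimsup
  linarith [Real.log_pos (by norm_num : (1 : ℝ) < 3)]

/-- **Failure of the law of large numbers for the spectral radius for Markovian
increments** (Aoun–Sert, Example 4.1): for the stationary Markov chain (X_n) on
{a, σ, ω} ⊆ SL₃(ℝ) with the transition probabilities above and with the stationary
initial distribution m, the products L_n = X_n ⋯ X_1 almost surely satisfy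
liminf (1/n) log ρ(L_n) = 0 and limsup (1/n) log ρ(L_n) ≥ (1/3) log 3 > 0; in
particular (1/n) log ρ(L_n) does not converge almost surely. -/
theorem markovian_failure_of_LLN_spectral_radius
    {Ω : Type*} [MeasureSpace Ω] [IsProbabilityMeasure (ℙ : Measure Ω)]
    (X : ℕ → Ω → Matrix (Fin 3) (Fin 3) ℝ)
    (hXmeas : ∀ n, Measurable (X n))
    (hstates : ∀ n ω, X n ω ∈ ({mA, mS, mW} : Set (Matrix (Fin 3) (Fin 3) ℝ)))
    -- the finite-dimensional distributions of the stationary Markov chain: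
    (hMarkov : ∀ (n : ℕ) (w : ℕ → Matrix (Fin 3) (Fin 3) ℝ),
      ℙ {ω | ∀ i ≤ n, X i ω = w i} =
        ENNReal.ofReal (m0 (w 0) * ∏ i ∈ Finset.range n, trans (w i) (w (i + 1)))) :
    (0:ℝ) < (1/3) * Real.log 3
    ∧ ∀ᵐ ω,
        Filter.liminf (fun n => Real.log (specRadR (Lprod X n ω)) / n) atTop = 0
        ∧ (1/3) * Real.log 3
            ≤ Filter.limsup (fun n => Real.log (specRadR (Lprod X n ω)) / n) atTop
        ∧ ¬ ∃ c : ℝ, Tendsto (fun n => Real.log (specRadR (Lprod X n ω)) / n)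
              atTop (𝓝 c) :=
  markovian_failure_of_LLN_spectral_radius_general X hstates hMarkov

end RMP
end
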